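/- A cyclical move does not change the size of any cluster: if the clustering-difference graph CDG(c, c'') is a single directed cycle, then |c⁻¹(i)| = |c''⁻¹(i)| for every cluster index i. -/
import Mathlib


variable {X : Type*} [Fintype X] [DecidableEq X] {k : ℕ}

/-- The clustering-difference graph `CDG(c, c'')` (one edge `c x → c'' x` for each
item `x` with `c x ≠ c'' x`) is a single directed cycle: there are `m + 1` distinct
cluster indices `v 0, ..., v m` and the items moved are exactly one per edge
`v i → v (i+1)` (indices mod `m + 1`). -/
def IsCyclicalMove (c c'' : X → Fin k) : Prop :=
  ∃ (m : ℕ) (v : Fin (m + 1) ↪ Fin k)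
    (e : {x : X // c x ≠ c'' x} ≃ Fin (m + 1)),
    ∀ x : {x : X // c x ≠ c'' x}, c x.1 = v (e x) ∧ c'' x.1 = v (e x + 1)

/-- The clustering-difference graph `CDG(c, c'')` is a single directed path: there
are `m + 2` distinct cluster indices `v 0, ..., v (m+1)` and the items moved are
exactly one per edge `v i → v (i+1)`, `0 ≤ i ≤ m`. -/
def IsSequentialMove (c c'' : X → Fin k) : Prop :=
  ∃ (m : ℕ) (v : Fin (m + 2) ↪ Fin k)
    (e : {x : X // c x ≠ c'' x} ≃ Fin (m + 1)),
    ∀ x : {x : X // c x ≠ c'' x}, c x.1 = v (e x).castSucc ∧ c'' x.1 = v (e x).succ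

/-- An elementary move: a cyclical or a sequential move. -/
def IsMove (c c'' : X → Fin k) : Prop :=
  IsCyclicalMove c c'' ∨ IsSequentialMove c c''

/-- The transformation distance: the minimum number of elementary moves needed to
transform `c` into `c'`. -/
noncomputable def transDist (c c' : X → Fin k) : ℕ :=
  sInf {n | ∃ f : ℕ → X → Fin k, f 0 = c ∧ f n = c' ∧ ∀ i < n, IsMove (f i) (f (i + 1))}

/-- The size of cluster `i` in the clustering `c`. -/
def clusterSize (c : X → Fin k) (i : Fin k) : ℕ :=
  (Finset.univ.filter fun x => c x = i).card

/-- The outdegree of vertex `i` in `CDG(c, c')`. -/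
def cdgOutdeg (c c' : X → Fin k) (i : Fin k) : ℕ :=
  (Finset.univ.filter fun x => c x = i ∧ c' x ≠ i).card

/-- The indegree of vertex `i` in `CDG(c, c')`. -/
def cdgIndeg (c c' : X → Fin k) (i : Fin k) : ℕ :=
  (Finset.univ.filter fun x => c' x = i ∧ c x ≠ i).card

/-- The shared degree of vertex `i` in `CDG(c, c')`. -/
def sharedDeg (c c' : X → Fin k) (i : Fin k) : ℕ :=
  min (cdgIndeg c c' i) (cdgOutdeg c c' i)

/-- A cyclical move does not change the size of any cluster. -/
theorem stmt_8 (c c'' : X → Fin k) (h : IsCyclicalMove c c'') (i : Fin k) :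
    clusterSize c i = clusterSize c'' i := by
  obtain ⟨m, v, e, he⟩ := h
  classical
  unfold clusterSize
  set f : X → X := fun x => if hx : c x ≠ c'' x then (e.symm (e ⟨x, hx⟩ - 1)).1 else x with hf
  set g : X → X := fun x => if hx : c x ≠ c'' x then (e.symm (e ⟨x, hx⟩ + 1)).1 else x with hg
  apply Finset.card_bij' (fun x _ => f x) (fun x _ => g x)
  · intro a ha
    simp only [Finset.mem_filter, Finset.mem_univ, true_and] at ha ⊢
    by_cases hx : c a ≠ c'' a
    · simp only [hf, dif_pos hx]
      have := (he (e.symm (e ⟨a, hx⟩ - 1))).2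
      rw [this, Equiv.apply_symm_apply, sub_add_cancel]
      rw [← (he ⟨a, hx⟩).1]; exact ha
    · simp only [hf, dif_neg hx]
      push_neg at hx; rw [← hx]; exact ha
  · intro a ha
    simp only [Finset.mem_filter, Finset.mem_univ, true_and] at ha ⊢
    by_cases hx : c a ≠ c'' a
    · simp only [hg, dif_pos hx]
      have := (he (e.symm (e ⟨a, hx⟩ + 1))).1
      rw [this, Equiv.apply_symm_apply]
      rw [← (he ⟨a, hx⟩).2]; exact ha
    · simp only [hg, dif_neg hx]
      push_neg at hx; rw [hx]; exact ha
  · intro a _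
    by_cases hx : c a ≠ c'' a
    · simp only [hf, hg, dif_pos hx]
      have hy := (e.symm (e ⟨a, hx⟩ - 1)).2
      rw [dif_pos hy]
      have : (⟨(e.symm (e ⟨a, hx⟩ - 1)).1, hy⟩ : {x : X // c x ≠ c'' x})
          = e.symm (e ⟨a, hx⟩ - 1) := rfl
      rw [this, Equiv.apply_symm_apply, sub_add_cancel, Equiv.symm_apply_apply]
    · simp only [hf, hg, dif_neg hx]
  · intro a _
    by_cases hx : c a ≠ c'' a
    · simp only [hf, hg, dif_pos hx]
      have hy := (e.symm (e ⟨a, hx⟩ + 1)).2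
      rw [dif_pos hy]
      have : (⟨(e.symm (e ⟨a, hx⟩ + 1)).1, hy⟩ : {x : X // c x ≠ c'' x})
          = e.symm (e ⟨a, hx⟩ + 1) := rfl
      rw [this, Equiv.apply_symm_apply, add_sub_cancel_right, Equiv.symm_apply_apply]
    · simp only [hf, hg, dif_neg hx]
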